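/- Let A ∈ ℝ^{m×n} be the incidence matrix of a simple directed graph G with girth g (G contains at least one simple cycle). Then the nullspace constant satisfies nsc(s, A) = min{1, s/g} for every integer s ≥ 1. Consequently, every s-sparse vector x̄ ∈ ℝⁿ is the unique solution of min ‖x‖₁ subject to Ax = Ax̄ if and only if s < g/2. -/

import Mathlib

/-- The ℓ₁ norm of a vector in ℝⁿ. -/
noncomputable def l1 {n : ℕ} (x : Fin n → ℝ) : ℝ := ∑ i, |x i|

/-- The ℓ₁ norm of the restriction of a vector to an index set `S`. -/
noncomputable def l1S {n : ℕ} (S : Finset (Fin n)) (x : Fin n → ℝ) : ℝ := ∑ i ∈ S, |x i|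

/-- The support of a vector, as a finite index set. -/
noncomputable def suppF {n : ℕ} (x : Fin n → ℝ) : Finset (Fin n) :=
  Finset.univ.filter (fun i => x i ≠ 0)

/-- A directed graph on `m` vertices with `n` edges given by `E : Fin n → Fin m × Fin m`
(each edge is an ordered pair (initial vertex, terminal vertex)) is simple if it has no
self-loops and any two vertices are connected by at most one edge (in either direction). -/
def IsSimpleDigraph {m n : ℕ} (E : Fin n → Fin m × Fin m) : Prop :=
  (∀ j, (E j).1 ≠ (E j).2) ∧
  ∀ j k, j ≠ k → E j ≠ E k ∧ E j ≠ ((E k).2, (E k).1)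

/-- The incidence matrix `A ∈ ℝ^{m×n}` of a directed graph. -/
def IncMatrix {m n : ℕ} (E : Fin n → Fin m × Fin m) : Matrix (Fin m) (Fin n) ℝ :=
  Matrix.of fun i j => if (E j).1 = i then -1 else if (E j).2 = i then 1 else 0

/-- Cyclic successor on `Fin len`. -/
def cyc {len : ℕ} (i : Fin len) : Fin len := ⟨(i.1 + 1) % len, Nat.mod_lt _ i.pos⟩

/-- A simple cycle of the directed graph `E`: a cyclic sequence of at least 3 distinct
vertices, each consecutive pair being joined by an edge (traversed in either direction). -/
structure SimpleCycleIn (m n : ℕ) (E : Fin n → Fin m × Fin m) where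
  len : ℕ
  hlen : 3 ≤ len
  vert : Fin len → Fin m
  inj : Function.Injective vert
  edges : ∀ i : Fin len, ∃ j : Fin n,
    E j = (vert i, vert (cyc i)) ∨ E j = (vert (cyc i), vert i)

/-- The nullspace constant `nsc(s, Φ)`: the max over index sets `S` with `|S| ≤ s` and
over `η ∈ null(Φ) ∩ B₁ⁿ` of `‖η_S‖₁`. -/
noncomputable def nsc {m n : ℕ} (s : ℕ) (Φ : Matrix (Fin m) (Fin n) ℝ) : ℝ :=
  sSup {r : ℝ | ∃ S : Finset (Fin n), S.card ≤ s ∧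
    ∃ η : Fin n → ℝ, Φ.mulVec η = 0 ∧ l1 η ≤ 1 ∧ r = l1S S η}

/-!
A vector `η` in the null space of the incidence matrix is a circulation. Following the edges
along which `η` flows forward must close a cycle `C`, of length at least 3 since the graph is
simple, and subtracting the largest multiple `c` of the unit circulation of `C` that keeps the
signs of `η` shrinks the support while removing exactly `|C| c ≥ g c` of ℓ₁ mass. By induction
on the support, `g |η j| ≤ ‖η‖₁` for every edge `j`, hence `‖η_S‖₁ ≤ (s / g) ‖η‖₁` whenever
`|S| ≤ s`. The unit circulation of a shortest cycle, looked at on `min s g` of its edges, attains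
this bound, so `nsc(s, A) = min 1 (s / g)`; the recovery criterion is the null space property
`nsc(s, A) < 1/2`.
-/

open Function
open scoped Matrix

section SparseRecovery

variable {m n : ℕ}

lemma mem_suppF {x : Fin n → ℝ} {j : Fin n} : j ∈ suppF x ↔ x j ≠ 0 := by
  simp [suppF]

lemma l1_nonneg (x : Fin n → ℝ) : 0 ≤ l1 x :=
  Finset.sum_nonneg fun _ _ => abs_nonneg _

lemma l1_pos {x : Fin n → ℝ} (hx : x ≠ 0) : 0 < l1 x := by
  obtain ⟨j, hj⟩ := Function.ne_iff.mp hx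
  exact (abs_pos.2 hj).trans_le
    (Finset.single_le_sum (fun i _ => abs_nonneg (x i)) (Finset.mem_univ j))

lemma l1S_le_l1 (S : Finset (Fin n)) (x : Fin n → ℝ) : l1S S x ≤ l1 x :=
  Finset.sum_le_sum_of_subset_of_nonneg (Finset.subset_univ S) fun _ _ _ => abs_nonneg _

lemma l1_smul (c : ℝ) (x : Fin n → ℝ) : l1 (c • x) = |c| * l1 x := by
  simp [l1, abs_mul, Finset.mul_sum]

lemma l1S_smul (S : Finset (Fin n)) (c : ℝ) (x : Fin n → ℝ) :
    l1S S (c • x) = |c| * l1S S x := by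
  simp [l1S, abs_mul, Finset.mul_sum]

lemma nsc_eq {Φ : Matrix (Fin m) (Fin n) ℝ} {s : ℕ} {a : ℝ}
    (hle : ∀ S : Finset (Fin n), S.card ≤ s → ∀ η, Φ *ᵥ η = 0 → l1 η ≤ 1 → l1S S η ≤ a)
    (hex : ∃ S : Finset (Fin n), S.card ≤ s ∧ ∃ η, Φ *ᵥ η = 0 ∧ l1 η ≤ 1 ∧ l1S S η = a) :
    nsc s Φ = a := by
  refine IsGreatest.csSup_eq ⟨?_, ?_⟩
  · obtain ⟨S, hS, η, hη, h1, rfl⟩ := hex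
    exact ⟨S, hS, η, hη, h1, rfl⟩
  · rintro r ⟨S, hS, η, hη, h1, rfl⟩
    exact hle S hS η hη h1

lemma l1_lt_l1_add {x η : Fin n → ℝ} (h : 2 * l1S (suppF x) η < l1 η) :
    l1 x < l1 (x + η) := by
  have hpt : ∀ j, |x j| + |η j| - 2 * (if j ∈ suppF x then |η j| else 0) ≤ |(x + η) j| := by
    intro j
    split_ifs with hj
    · have := abs_add_le (x j + η j) (-η j)
      rw [add_neg_cancel_right, abs_neg] at this
      simp only [Pi.add_apply]
      linarith
    · rw [mem_suppF, not_not] at hj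
      simp [hj]
  have hsum := Finset.sum_le_sum fun j (_ : j ∈ Finset.univ) => hpt j
  simp only [Finset.sum_sub_distrib, Finset.sum_add_distrib, ← Finset.mul_sum,
    Finset.sum_ite_mem, Finset.univ_inter] at hsum
  unfold l1 l1S at *
  linarith

/-- The witnesses are `xbar = η|_S` and `x = η|_S - η`. -/
lemma exists_l1_le_of_l1_le_two_mul_l1S {Φ : Matrix (Fin m) (Fin n) ℝ} {η : Fin n → ℝ}
    (hη : Φ *ᵥ η = 0) (hne : η ≠ 0) (S : Finset (Fin n)) (h : l1 η ≤ 2 * l1S S η) :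
    ∃ xbar, suppF xbar ⊆ S ∧ ∃ x, Φ *ᵥ x = Φ *ᵥ xbar ∧ x ≠ xbar ∧ l1 x ≤ l1 xbar := by
  set xbar : Fin n → ℝ := fun j => if j ∈ S then η j else 0
  have hsupp : suppF xbar ⊆ S := fun j hj => by
    by_contra hjS
    exact mem_suppF.1 hj (if_neg hjS)
  have hxbar : l1 xbar = l1S S η := by
    simp only [l1, l1S, xbar, apply_ite abs, abs_zero, Finset.sum_ite_mem, Finset.univ_inter]
  have hsplit : l1 (xbar - η) + l1 xbar = l1 η := by
    simp only [l1, ← Finset.sum_add_distrib]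
    refine Finset.sum_congr rfl fun j _ => ?_
    simp only [Pi.sub_apply, xbar]
    split_ifs <;> simp
  refine ⟨xbar, hsupp, xbar - η, by rw [Matrix.mulVec_sub, hη, sub_zero], ?_, by linarith⟩
  rwa [Ne, sub_eq_self]

end SparseRecovery

lemma val_cyc {len : ℕ} (i : Fin len) :
    (cyc i).val = if i.val + 1 = len then 0 else i.val + 1 := by
  have := i.2
  split_ifs with h
  · simp [cyc, h]
  · exact Nat.mod_eq_of_lt (by omega)

lemma cyc_ne_self {len : ℕ} (h : 2 ≤ len) (i : Fin len) : cyc i ≠ i := by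
  intro hi
  have := congrArg Fin.val hi
  rw [val_cyc] at this
  split_ifs at this <;> omega

lemma cyc_cyc_ne_self {len : ℕ} (h : 3 ≤ len) (i : Fin len) : cyc (cyc i) ≠ i := by
  intro hi
  have hval := congrArg Fin.val hi
  have := i.2
  rw [val_cyc, val_cyc] at hval
  split_ifs at hval <;> omega

lemma cyc_injective {len : ℕ} : Injective (@cyc len) := by
  intro i k hik
  have hval := congrArg Fin.val hik
  have := i.2
  have := k.2
  rw [val_cyc, val_cyc] at hval
  exact Fin.ext (by split_ifs at hval <;> omega)

lemma sum_comp_cyc {len : ℕ} {M : Type*} [AddCommMonoid M] (f : Fin len → M) :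
    ∑ i, f (cyc i) = ∑ i, f i :=
  cyc_injective.bijective_of_finite.sum_comp f

/-- Iterating from a periodic point of minimal period `L` traces an injective cycle. -/
lemma Function.exists_cycle_of_finite {α : Type*} [Finite α] [Nonempty α] (f : α → α) :
    ∃ (L : ℕ) (v : Fin L → α), 0 < L ∧ Injective v ∧ ∀ i, v (cyc i) = f (v i) := by
  obtain ⟨x⟩ := ‹Nonempty α›
  obtain ⟨a, b, hab, heq⟩ := Finite.exists_ne_map_eq_of_infinite (fun k : ℕ => f^[k] x)
  wlog hlt : a < b generalizing a b
  · exact this b a hab.symm heq.symm (by omega)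
  have hy : IsPeriodicPt f (b - a) (f^[a] x) := by
    rw [IsPeriodicPt, IsFixedPt, ← iterate_add_apply, Nat.sub_add_cancel hlt.le]
    exact heq.symm
  refine ⟨minimalPeriod f (f^[a] x), fun i => f^[i] (f^[a] x),
    hy.minimalPeriod_pos (by omega),
    fun i k h => Fin.ext (iterate_injOn_Iio_minimalPeriod i.2 k.2 h), fun i => ?_⟩
  change f^[(i + 1) % _] _ = _
  rw [iterate_mod_minimalPeriod_eq, iterate_succ_apply']

lemma exists_cycle_of_rel {α : Type*} [Finite α] {R : α → α → Prop} (hstart : ∃ u v, R u v)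
    (hnext : ∀ v, (∃ u, R u v) → ∃ w, R v w) :
    ∃ (L : ℕ) (v : Fin L → α), 0 < L ∧ Injective v ∧ ∀ i, R (v i) (v (cyc i)) := by
  obtain ⟨u, v, huv⟩ := hstart
  have : Nonempty {v // ∃ u, R u v} := ⟨⟨v, u, huv⟩⟩
  let next (w : {v // ∃ u, R u v}) : {v // ∃ u, R u v} :=
    ⟨(hnext w w.2).choose, w, (hnext w w.2).choose_spec⟩
  obtain ⟨L, w, hL, hinj, hw⟩ := exists_cycle_of_finite next
  refine ⟨L, fun i => w i, hL, Subtype.val_injective.comp hinj, fun i => ?_⟩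
  simp only [hw]
  exact (hnext _ (w i).2).choose_spec

section Digraph

variable {m n : ℕ} {E : Fin n → Fin m × Fin m}

lemma IsSimpleDigraph.eq_of_joins (hE : IsSimpleDigraph E) {j k : Fin n} {u v : Fin m}
    (hj : E j = (u, v) ∨ E j = (v, u)) (hk : E k = (u, v) ∨ E k = (v, u)) : j = k := by
  by_contra hne
  have := hE.2 j k hne
  rcases hj with hj | hj <;> rcases hk with hk | hk <;> simp_all

lemma incMatrix_fst (j : Fin n) : IncMatrix E (E j).1 j = -1 := by
  simp [IncMatrix]

lemma incMatrix_snd (hE : IsSimpleDigraph E) (j : Fin n) : IncMatrix E (E j).2 j = 1 := by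
  simp [IncMatrix, hE.1 j]

lemma incMatrix_of_ne {v : Fin m} {j : Fin n} (h1 : (E j).1 ≠ v) (h2 : (E j).2 ≠ v) :
    IncMatrix E v j = 0 := by
  simp [IncMatrix, h1, h2]

lemma incMatrix_mulVec_apply (x : Fin n → ℝ) (v : Fin m) :
    (IncMatrix E *ᵥ x) v = ∑ j, IncMatrix E v j * x j := rfl

def FlowStep (E : Fin n → Fin m × Fin m) (η : Fin n → ℝ) (u v : Fin m) : Prop :=
  ∃ j, (E j = (u, v) ∧ 0 < η j) ∨ (E j = (v, u) ∧ η j < 0)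

variable {η : Fin n → ℝ} {u v : Fin m}

lemma FlowStep.ne (hE : IsSimpleDigraph E) (h : FlowStep E η u v) : u ≠ v := by
  rintro rfl
  obtain ⟨j, ⟨hj, -⟩ | ⟨hj, -⟩⟩ := h <;> exact hE.1 j (by rw [hj])

lemma FlowStep.not_flowStep_symm (hE : IsSimpleDigraph E) (h : FlowStep E η u v) :
    ¬FlowStep E η v u := by
  have huv := h.ne hE
  rintro ⟨k, hk⟩
  obtain ⟨j, hj⟩ := h
  obtain rfl := hE.eq_of_joins (hj.imp And.left And.left) (hk.symm.imp And.left And.left)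
  rcases hj with ⟨hj, hj'⟩ | ⟨hj, hj'⟩ <;> rcases hk with ⟨hk, hk'⟩ | ⟨hk, hk'⟩ <;>
    simp_all [Prod.ext_iff] <;> linarith

lemma exists_flowStep (hη : η ≠ 0) : ∃ u v, FlowStep E η u v := by
  obtain ⟨j, hj⟩ := Function.ne_iff.mp hη
  rcases hj.lt_or_gt with h | h
  · exact ⟨(E j).2, (E j).1, j, Or.inr ⟨rfl, h⟩⟩
  · exact ⟨(E j).1, (E j).2, j, Or.inl ⟨rfl, h⟩⟩

/-- Flow conservation: whatever enters a vertex must leave it. -/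
lemma FlowStep.exists_flowStep (hE : IsSimpleDigraph E) (hη : IncMatrix E *ᵥ η = 0)
    (h : FlowStep E η u v) : ∃ w, FlowStep E η v w := by
  have hin : ∃ j, 0 < IncMatrix E v j * η j := by
    obtain ⟨j, ⟨hj, hpos⟩ | ⟨hj, hneg⟩⟩ := h
    · refine ⟨j, ?_⟩
      rw [show v = (E j).2 by rw [hj], incMatrix_snd hE]
      linarith
    · refine ⟨j, ?_⟩
      rw [show v = (E j).1 by rw [hj], incMatrix_fst]
      linarith
  obtain ⟨j, hj⟩ : ∃ j, IncMatrix E v j * η j < 0 := by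
    by_contra! hnonneg
    obtain ⟨j, hj⟩ := hin
    have hsum := congrFun hη v
    rw [incMatrix_mulVec_apply, Pi.zero_apply,
      Finset.sum_eq_zero_iff_of_nonneg fun j _ => hnonneg j] at hsum
    exact hj.ne' (hsum j (Finset.mem_univ j))
  by_cases h1 : (E j).1 = v
  · subst h1
    rw [incMatrix_fst] at hj
    exact ⟨(E j).2, j, Or.inl ⟨rfl, by linarith⟩⟩
  by_cases h2 : (E j).2 = v
  · subst h2
    rw [incMatrix_snd hE] at hj
    exact ⟨(E j).1, j, Or.inr ⟨rfl, by linarith⟩⟩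
  · rw [incMatrix_of_ne h1 h2, zero_mul] at hj
    exact absurd hj (lt_irrefl 0)

end Digraph

namespace SimpleCycleIn

variable {m n : ℕ} {E : Fin n → Fin m × Fin m} (C : SimpleCycleIn m n E)

noncomputable def edge (i : Fin C.len) : Fin n := (C.edges i).choose

noncomputable def sign (i : Fin C.len) : ℝ :=
  if E (C.edge i) = (C.vert i, C.vert (cyc i)) then 1 else -1

lemma vert_cyc_ne (i : Fin C.len) : C.vert (cyc i) ≠ C.vert i :=
  C.inj.ne (cyc_ne_self (by linarith [C.hlen]) i)

lemma edge_spec (i : Fin C.len) :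
    (E (C.edge i) = (C.vert i, C.vert (cyc i)) ∧ C.sign i = 1) ∨
      (E (C.edge i) = (C.vert (cyc i), C.vert i) ∧ C.sign i = -1) := by
  rcases (C.edges i).choose_spec with h | h
  · exact Or.inl ⟨h, if_pos h⟩
  · refine Or.inr ⟨h, if_neg ?_⟩
    rw [edge, h, Prod.ext_iff]
    exact fun he => C.vert_cyc_ne i he.1

lemma abs_sign (i : Fin C.len) : |C.sign i| = 1 := by
  rcases C.edge_spec i with ⟨-, h⟩ | ⟨-, h⟩ <;> simp [h]

lemma sign_mul_self (i : Fin C.len) : C.sign i * C.sign i = 1 := by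
  rcases C.edge_spec i with ⟨-, h⟩ | ⟨-, h⟩ <;> simp [h]

lemma edge_injective : Function.Injective C.edge := by
  intro i k hik
  by_contra hne
  have hE : E (C.edge i) = E (C.edge k) := by rw [hik]
  rcases C.edge_spec i with ⟨hi, -⟩ | ⟨hi, -⟩ <;> rcases C.edge_spec k with ⟨hk, -⟩ | ⟨hk, -⟩ <;>
    rw [hi, hk, Prod.ext_iff] at hE <;> obtain ⟨h1, h2⟩ := hE
  · exact hne (C.inj h1)
  · exact cyc_cyc_ne_self C.hlen k (by rw [← C.inj h1]; exact C.inj h2)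
  · exact cyc_cyc_ne_self C.hlen k (by rw [← C.inj h2]; exact C.inj h1)
  · exact hne (C.inj h2)

noncomputable def circulation : Fin n → ℝ :=
  fun j => ∑ i, if C.edge i = j then C.sign i else 0

lemma circulation_edge (i : Fin C.len) : C.circulation (C.edge i) = C.sign i := by
  simp [circulation, C.edge_injective.eq_iff]

lemma circulation_eq_zero {j : Fin n} (hj : j ∉ Set.range C.edge) : C.circulation j = 0 :=
  Finset.sum_eq_zero fun i _ => if_neg fun h => hj ⟨i, h⟩

lemma abs_circulation_le_one (j : Fin n) : |C.circulation j| ≤ 1 := by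
  by_cases hj : j ∈ Set.range C.edge
  · obtain ⟨i, rfl⟩ := hj
    rw [circulation_edge, abs_sign]
  · simp [C.circulation_eq_zero hj]

lemma incMatrix_edge_mul_sign (v : Fin m) (i : Fin C.len) :
    IncMatrix E v (C.edge i) * C.sign i =
      (if C.vert (cyc i) = v then 1 else 0) - (if C.vert i = v then 1 else 0) := by
  have hne := C.vert_cyc_ne i
  rcases C.edge_spec i with ⟨h, hs⟩ | ⟨h, hs⟩ <;>
    simp only [IncMatrix, Matrix.of_apply, h, hs] <;> split_ifs <;> simp_all

lemma mulVec_circulation : IncMatrix E *ᵥ C.circulation = 0 := by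
  funext v
  simp only [incMatrix_mulVec_apply, circulation, Finset.mul_sum, mul_ite, mul_zero,
    Pi.zero_apply]
  rw [Finset.sum_comm]
  simp only [Finset.sum_ite_eq, Finset.mem_univ, if_true, incMatrix_edge_mul_sign,
    Finset.sum_sub_distrib]
  rw [sum_comp_cyc fun i => if C.vert i = v then (1 : ℝ) else 0, sub_self]

lemma l1_circulation : l1 C.circulation = C.len := by
  rw [l1, ← Finset.sum_subset (Finset.subset_univ (Finset.univ.image C.edge)),
    Finset.sum_image fun a _ b _ h => C.edge_injective h]
  · simp [circulation_edge, abs_sign]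
  · intro j _ hj
    rw [C.circulation_eq_zero (by simpa using hj), abs_zero]

lemma circulation_ne_zero : C.circulation ≠ 0 := by
  intro h
  have hl1 := C.l1_circulation
  rw [h] at hl1
  simp only [l1, Pi.zero_apply, abs_zero, Finset.sum_const_zero] at hl1
  have := C.hlen
  norm_cast at hl1
  omega

lemma exists_l1S_circulation_eq {t : ℕ} (ht : t ≤ C.len) :
    ∃ T : Finset (Fin n), T.card = t ∧ l1S T C.circulation = t := by
  obtain ⟨T, hT, hcard⟩ := Finset.exists_subset_card_eq (s := Finset.univ.image C.edge) (n := t)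
    (by rwa [Finset.card_image_of_injective _ C.edge_injective, Finset.card_fin])
  refine ⟨T, hcard, ?_⟩
  have hone : ∀ j ∈ T, |C.circulation j| = 1 := by
    intro j hj
    obtain ⟨i, -, rfl⟩ := Finset.mem_image.mp (hT hj)
    rw [circulation_edge, abs_sign]
  rw [l1S, Finset.sum_congr rfl hone, Finset.sum_const, hcard, nsmul_one]

def IsConformal (η : Fin n → ℝ) : Prop :=
  ∀ i, 0 < C.sign i * η (C.edge i)

variable {C} {η : Fin n → ℝ}

lemma IsConformal.abs_edge (h : C.IsConformal η) (i : Fin C.len) :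
    |η (C.edge i)| = C.sign i * η (C.edge i) := by
  rw [← abs_of_pos (h i), abs_mul, C.abs_sign, one_mul]

lemma IsConformal.abs_sub_smul_circulation (h : C.IsConformal η) {c : ℝ}
    (hc : ∀ i, c ≤ |η (C.edge i)|) (j : Fin n) :
    |(η - c • C.circulation) j| = |η j| - c * |C.circulation j| := by
  simp only [Pi.sub_apply, Pi.smul_apply, smul_eq_mul]
  by_cases hj : j ∈ Set.range C.edge
  · obtain ⟨i, rfl⟩ := hj
    have hfactor : η (C.edge i) - c * C.sign i = C.sign i * (|η (C.edge i)| - c) := by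
      rw [h.abs_edge, mul_sub, ← mul_assoc, C.sign_mul_self, one_mul, mul_comm]
    rw [circulation_edge, hfactor, abs_mul, C.abs_sign, one_mul, mul_one,
      abs_of_nonneg (sub_nonneg.2 (hc i))]
  · simp [C.circulation_eq_zero hj]

lemma IsConformal.exists_peel (h : C.IsConformal η) : ∃ c > 0,
    (suppF (η - c • C.circulation)).card < (suppF η).card ∧
      ∀ j, |η j| = |(η - c • C.circulation) j| + c * |C.circulation j| := by
  have : Nonempty (Fin C.len) := ⟨⟨0, by linarith [C.hlen]⟩⟩
  obtain ⟨i₀, hi₀⟩ := Finite.exists_min fun i => |η (C.edge i)|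
  have hc : 0 < |η (C.edge i₀)| := by rw [h.abs_edge]; exact h i₀
  have hpeel := h.abs_sub_smul_circulation hi₀
  refine ⟨_, hc, Finset.card_lt_card ?_, fun j => by rw [hpeel]; ring⟩
  rw [Finset.ssubset_iff_of_subset]
  · refine ⟨C.edge i₀, mem_suppF.2 (abs_pos.1 hc), ?_⟩
    rw [mem_suppF, not_not, ← abs_eq_zero, hpeel, circulation_edge, C.abs_sign]
    ring
  · intro j hj
    rw [mem_suppF, ← abs_pos] at hj ⊢
    rw [hpeel] at hj
    nlinarith [abs_nonneg (C.circulation j)]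

end SimpleCycleIn

section Girth

variable {m n : ℕ} {E : Fin n → Fin m × Fin m} {η : Fin n → ℝ}

theorem exists_isConformal (hE : IsSimpleDigraph E) (hη : IncMatrix E *ᵥ η = 0) (hne : η ≠ 0) :
    ∃ C : SimpleCycleIn m n E, C.IsConformal η := by
  obtain ⟨L, v, hL, hinj, hstep⟩ := exists_cycle_of_rel (exists_flowStep hne)
    fun _ ⟨_, h⟩ => h.exists_flowStep hE hη
  have hL3 : 3 ≤ L := by
    by_contra! hL3
    interval_cases L
    · exact (hstep 0).ne hE rfl
    · exact (hstep 0).not_flowStep_symm hE (hstep 1)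
  let C : SimpleCycleIn m n E :=
    ⟨L, hL3, v, hinj, fun i => (hstep i).imp fun _ hj => hj.imp And.left And.left⟩
  refine ⟨C, fun i => ?_⟩
  obtain ⟨j, hj⟩ := hstep i
  have hne := C.vert_cyc_ne i
  obtain rfl : C.edge i = j :=
    hE.eq_of_joins ((C.edge_spec i).imp And.left And.left) (hj.imp And.left And.left)
  rcases C.edge_spec i with ⟨he, hs⟩ | ⟨he, hs⟩ <;> rcases hj with ⟨hj, hj'⟩ | ⟨hj, hj'⟩ <;>
    rw [hs]
  · linarith
  · exact absurd (Prod.ext_iff.1 (he.symm.trans hj)).2 hne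
  · exact absurd (Prod.ext_iff.1 (he.symm.trans hj)).1 hne
  · linarith

theorem girth_mul_abs_le_l1 (hE : IsSimpleDigraph E) {g : ℕ}
    (hg : ∀ C : SimpleCycleIn m n E, g ≤ C.len) (hη : IncMatrix E *ᵥ η = 0) (j : Fin n) :
    g * |η j| ≤ l1 η := by
  induction hN : (suppF η).card using Nat.strong_induction_on generalizing η with
  | _ N ih =>
  by_cases hne : η = 0
  · simp [hne, l1]
  obtain ⟨C, hC⟩ := exists_isConformal hE hη hne
  obtain ⟨c, hc, hcard, hpeel⟩ := hC.exists_peel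
  set η' := η - c • C.circulation
  have hη' : IncMatrix E *ᵥ η' = 0 := by
    rw [Matrix.mulVec_sub, Matrix.mulVec_smul, hη, C.mulVec_circulation, smul_zero, sub_zero]
  have hl1 : l1 η = l1 η' + c * C.len := by
    rw [← C.l1_circulation, l1, Finset.sum_congr rfl fun j _ => hpeel j, Finset.sum_add_distrib,
      ← Finset.mul_sum]
    rfl
  have hg' : (g : ℝ) ≤ C.len := by exact_mod_cast hg C
  calc (g : ℝ) * |η j| = g * |η' j| + g * (c * |C.circulation j|) := by rw [hpeel j]; ring
    _ ≤ l1 η' + C.len * (c * 1) := by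
      gcongr
      · exact ih _ (hN ▸ hcard) hη' rfl
      · exact C.abs_circulation_le_one j
    _ = l1 η := by rw [hl1]; ring

theorem girth_mul_l1S_le (hE : IsSimpleDigraph E) {g : ℕ}
    (hg : ∀ C : SimpleCycleIn m n E, g ≤ C.len) (hη : IncMatrix E *ᵥ η = 0)
    {S : Finset (Fin n)} {s : ℕ} (hS : S.card ≤ s) :
    g * l1S S η ≤ s * l1 η :=
  calc (g : ℝ) * l1S S η ≤ ∑ _j ∈ S, l1 η := by
        rw [l1S, Finset.mul_sum]
        exact Finset.sum_le_sum fun j _ => girth_mul_abs_le_l1 hE hg hη j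
    _ = S.card * l1 η := by rw [Finset.sum_const, nsmul_eq_mul]
    _ ≤ s * l1 η := by gcongr; exact l1_nonneg η

end Girth

section ShortestCycle

variable {m n : ℕ} {E : Fin n → Fin m × Fin m} (hE : IsSimpleDigraph E)
  {C : SimpleCycleIn m n E} (hC : ∀ C' : SimpleCycleIn m n E, C.len ≤ C'.len) (s : ℕ)
include hE hC

theorem nsc_incMatrix_eq : nsc s (IncMatrix E) = min 1 ((s : ℝ) / C.len) := by
  have hg : (0 : ℝ) < C.len := Nat.cast_pos.2 (by linarith [C.hlen])
  obtain ⟨T, hTcard, hT⟩ := C.exists_l1S_circulation_eq (min_le_right s C.len)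
  refine nsc_eq (fun S hS η hη h1 => le_min ((l1S_le_l1 S η).trans h1) ?_)
    ⟨T, hTcard ▸ min_le_left s C.len, (C.len : ℝ)⁻¹ • C.circulation, ?_, ?_, ?_⟩
  · rw [le_div_iff₀ hg, mul_comm]
    exact (girth_mul_l1S_le hE hC hη hS).trans (mul_le_of_le_one_right (Nat.cast_nonneg s) h1)
  · rw [Matrix.mulVec_smul, C.mulVec_circulation, smul_zero]
  · rw [l1_smul, C.l1_circulation, abs_inv, Nat.abs_cast, inv_mul_cancel₀ hg.ne']
  · rw [l1S_smul, hT, abs_inv, Nat.abs_cast, Nat.cast_min, inv_mul_eq_div,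
      ← min_div_div_right hg.le, div_self hg.ne', min_comm]

theorem sparse_recovery_iff_lt_half_girth :
    (∀ xbar : Fin n → ℝ, (suppF xbar).card ≤ s → ∀ x : Fin n → ℝ,
        IncMatrix E *ᵥ x = IncMatrix E *ᵥ xbar → x ≠ xbar → l1 xbar < l1 x) ↔
      (s : ℝ) < C.len / 2 := by
  refine ⟨fun hrec => ?_, fun hlt xbar hxbar x hx hne => ?_⟩
  · by_contra! hge
    obtain ⟨T, hTcard, hT⟩ := C.exists_l1S_circulation_eq (min_le_right s C.len)
    have hhalf : l1 C.circulation ≤ 2 * l1S T C.circulation := by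
      rw [C.l1_circulation, hT, Nat.cast_min]
      rcases min_cases (s : ℝ) C.len with ⟨h, -⟩ | ⟨h, -⟩ <;> rw [h] <;> linarith
    obtain ⟨xbar, hsupp, x, hx, hne, hle⟩ :=
      exists_l1_le_of_l1_le_two_mul_l1S C.mulVec_circulation C.circulation_ne_zero T hhalf
    have hsparse := (Finset.card_le_card hsupp).trans (hTcard ▸ min_le_left s C.len)
    exact (hrec xbar hsparse x hx hne).not_ge hle
  · have hη : IncMatrix E *ᵥ (x - xbar) = 0 := by rw [Matrix.mulVec_sub, hx, sub_self]
    have hpos := l1_pos (sub_ne_zero.2 hne)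
    have hbound := girth_mul_l1S_le hE hC hη hxbar
    have hg : (0 : ℝ) < C.len := Nat.cast_pos.2 (by linarith [C.hlen])
    simpa using l1_lt_l1_add (x := xbar) (η := x - xbar) (by nlinarith)

end ShortestCycle

theorem stmt11_general {m n : ℕ} (E : Fin n → Fin m × Fin m) (hsimple : IsSimpleDigraph E)
    (g : ℕ) (hg_cyc : ∃ C : SimpleCycleIn m n E, C.len = g)
    (hg_min : ∀ C : SimpleCycleIn m n E, g ≤ C.len)
    (s : ℕ) :
    nsc s (IncMatrix E) = min 1 ((s : ℝ) / (g : ℝ)) ∧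
    ((∀ xbar : Fin n → ℝ, (suppF xbar).card ≤ s →
        ∀ x : Fin n → ℝ, (IncMatrix E).mulVec x = (IncMatrix E).mulVec xbar → x ≠ xbar →
          l1 xbar < l1 x)
      ↔ (s : ℝ) < (g : ℝ) / 2) := by
  obtain ⟨C, rfl⟩ := hg_cyc
  exact ⟨nsc_incMatrix_eq hsimple hg_min s, sparse_recovery_iff_lt_half_girth hsimple hg_min s⟩

/-- Let `A` be the incidence matrix of a simple directed graph with girth `g` (the graph
contains at least one simple cycle, and `g` is the length of the shortest one).  Then
`nsc(s, A) = min {1, s/g}` for every integer `s ≥ 1`; consequently every `s`-sparse vector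
`xbar` is the unique solution of `min ‖x‖₁ s.t. A x = A xbar` iff `s < g/2`. -/
theorem stmt11 {m n : ℕ} (E : Fin n → Fin m × Fin m) (hsimple : IsSimpleDigraph E)
    (g : ℕ) (hg_cyc : ∃ C : SimpleCycleIn m n E, C.len = g)
    (hg_min : ∀ C : SimpleCycleIn m n E, g ≤ C.len)
    (s : ℕ) (hs : 1 ≤ s) :
    nsc s (IncMatrix E) = min 1 ((s : ℝ) / (g : ℝ)) ∧
    ((∀ xbar : Fin n → ℝ, (suppF xbar).card ≤ s →
        ∀ x : Fin n → ℝ, (IncMatrix E).mulVec x = (IncMatrix E).mulVec xbar → x ≠ xbar →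
          l1 xbar < l1 x)
      ↔ (s : ℝ) < (g : ℝ) / 2) :=
  stmt11_general E hsimple g hg_cyc hg_min s
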